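/- arXiv:1905.04605 — 5 statements merged into one kernel-verified Lean document; each statement's English description precedes it below -/
import Mathlib

section
/- If A(x) and B(x) are continuous matrix-valued functions such that all values A(x), B(y) commute with each other, then the product integral of A+B factorizes: ∏_s^t (I + (A(x)+B(x)) dx) = ∏_s^t (I + A(x) dx) · ∏_s^t (I + B(x) dx). In particular, for a scalar function r and matrix function M with commuting values, ∏_s^t (I + (M(x) − r(x)I) dx) = exp(−∫_s^t r(x) dx) · ∏_s^t (I + M(x) dx). -/
open Matrix MeasureTheory

attribute [local instance] Matrix.linftyOpNormedRing Matrix.linftyOpNormedAlgebra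

/-! Solutions of `F' = F * C` with continuous `C` are unique (Grönwall), so it suffices to check
that `FA * FB` solves the equation for `A + B`. Its derivative is `FA * A * FB + FA * FB * B`,
and `A t` commutes with `FB t` because `a * FB` and `FB * a` solve the same equation as `FB`
whenever `a` commutes with every value of `B`. The particular case is the factorization with
`B = -r • 1`, whose product integral is `exp (-∫ r) • 1`. -/

section LinearODE

variable {R : Type*} [NormedRing R] [NormedAlgebra ℝ R]

open Set in
theorem eq_zero_of_hasDerivAt_mul_right_of_le {C f : ℝ → R} {a b : ℝ}
    (hC : ContinuousOn C (Icc a b)) (hf : ∀ t, HasDerivAt f (f t * C t) t) (hab : a ≤ b)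
    (ha : f a = 0) : f b = 0 := by
  obtain ⟨K, hK⟩ := isCompact_Icc.exists_bound_of_continuousOn hC
  refine eq_zero_of_abs_deriv_le_mul_abs_self_of_eq_zero_right (K := K)
    (fun t _ => (hf t).continuousAt.continuousWithinAt) (fun t _ => (hf t).hasDerivWithinAt)
    ha (fun t ht => ?_) b ⟨hab, le_rfl⟩
  calc ‖f t * C t‖ ≤ ‖f t‖ * ‖C t‖ := norm_mul_le _ _
    _ ≤ ‖f t‖ * K := by gcongr; exact hK t (Ico_subset_Icc_self ht)
    _ = K * ‖f t‖ := mul_comm _ _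

theorem eq_zero_of_hasDerivAt_mul_right {C f : ℝ → R} (hC : Continuous C)
    (hf : ∀ t, HasDerivAt f (f t * C t) t) {s : ℝ} (hs : f s = 0) (t : ℝ) : f t = 0 := by
  rcases le_total s t with hst | hts
  · exact eq_zero_of_hasDerivAt_mul_right_of_le hC.continuousOn hf hst hs
  · have hf_neg : ∀ u, HasDerivAt (fun u => f (-u)) (f (-u) * -C (-u)) u := fun u =>
      ((hf (-u)).scomp u (hasDerivAt_neg u)).congr_deriv (by simp)
    simpa using eq_zero_of_hasDerivAt_mul_right_of_le
      (hC.comp continuous_neg).neg.continuousOn hf_neg (neg_le_neg hts) (by simpa using hs)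

theorem eq_of_hasDerivAt_mul_right {C f g : ℝ → R} (hC : Continuous C)
    (hf : ∀ t, HasDerivAt f (f t * C t) t) (hg : ∀ t, HasDerivAt g (g t * C t) t) {s : ℝ}
    (hs : f s = g s) (t : ℝ) : f t = g t :=
  sub_eq_zero.mp <| eq_zero_of_hasDerivAt_mul_right hC
    (fun u => ((hf u).sub (hg u)).congr_deriv (sub_mul _ _ _).symm) (sub_eq_zero.mpr hs) t

theorem commute_of_hasDerivAt_mul_right {B F : ℝ → R} (hB : Continuous B)
    (hF : ∀ t, HasDerivAt F (F t * B t) t) {s : ℝ} (hs : F s = 1) {a : R}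
    (ha : ∀ t, Commute a (B t)) (t : ℝ) : Commute a (F t) :=
  eq_of_hasDerivAt_mul_right hB (f := fun u => a * F u) (g := fun u => F u * a)
    (fun u => ((hF u).const_mul a).congr_deriv (mul_assoc _ _ _).symm)
    (fun u => ((hF u).mul_const a).congr_deriv (by rw [mul_assoc, mul_assoc, (ha u).eq]))
    (by rw [hs, one_mul, mul_one]) t

theorem eq_mul_of_hasDerivAt_mul_right_add {A B FA FB FAB : ℝ → R} (hA : Continuous A)
    (hB : Continuous B) (hcomm : ∀ x y, Commute (A x) (B y))
    (hFA : ∀ t, HasDerivAt FA (FA t * A t) t) (hFB : ∀ t, HasDerivAt FB (FB t * B t) t)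
    (hFAB : ∀ t, HasDerivAt FAB (FAB t * (A t + B t)) t) {s : ℝ} (hFA0 : FA s = 1)
    (hFB0 : FB s = 1) (hFAB0 : FAB s = 1) (t : ℝ) : FAB t = FA t * FB t := by
  have hAFB : ∀ u, Commute (A u) (FB u) := fun u =>
    commute_of_hasDerivAt_mul_right hB hFB hFB0 (hcomm u) u
  have hprod : ∀ u, HasDerivAt (fun v => FA v * FB v) (FA u * FB u * (A u + B u)) u :=
    fun u => ((hFA u).mul (hFB u)).congr_deriv <| by
      rw [mul_assoc (FA u) (A u), (hAFB u).eq]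
      simp only [mul_add, mul_assoc]
  exact eq_of_hasDerivAt_mul_right (hA.add hB) hFAB hprod
    (by rw [hFA0, hFB0, hFAB0, one_mul]) t

end LinearODE

theorem hasDerivAt_exp_neg_integral {r : ℝ → ℝ} (hr : Continuous r) (s t : ℝ) :
    HasDerivAt (fun u => Real.exp (-∫ x in s..u, r x))
      (Real.exp (-∫ x in s..t, r x) * -r t) t :=
  (intervalIntegral.integral_hasDerivAt_right (hr.intervalIntegrable s t)
    (hr.stronglyMeasurableAtFilter _ _) hr.continuousAt).neg.exp

theorem productIntegral_add_of_commute_general {p : ℕ}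
    (A B : ℝ → Matrix (Fin p) (Fin p) ℝ) (hA : Continuous A) (hB : Continuous B)
    (hcomm : ∀ x y : ℝ, Commute (A x) (B y))
    (FA FB FAB : ℝ → ℝ → Matrix (Fin p) (Fin p) ℝ)
    (hFA : ∀ s t : ℝ, HasDerivAt (fun u => FA s u) (FA s t * A t) t)
    (hFA0 : ∀ s : ℝ, FA s s = 1)
    (hFB : ∀ s t : ℝ, HasDerivAt (fun u => FB s u) (FB s t * B t) t)
    (hFB0 : ∀ s : ℝ, FB s s = 1)
    (hFAB : ∀ s t : ℝ, HasDerivAt (fun u => FAB s u) (FAB s t * (A t + B t)) t)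
    (hFAB0 : ∀ s : ℝ, FAB s s = 1)
    -- data for the particular case: a scalar function `r`, a matrix function `M` with
    -- commuting values, and the product integrals of `M` and of `M - r • 1`
    (r : ℝ → ℝ) (M : ℝ → Matrix (Fin p) (Fin p) ℝ) (hr : Continuous r) (hM : Continuous M)
    (FM FMr : ℝ → ℝ → Matrix (Fin p) (Fin p) ℝ)
    (hFM : ∀ s t : ℝ, HasDerivAt (fun u => FM s u) (FM s t * M t) t)
    (hFM0 : ∀ s : ℝ, FM s s = 1)
    (hFMr : ∀ s t : ℝ, HasDerivAt (fun u => FMr s u) (FMr s t * (M t - r t • 1)) t)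
    (hFMr0 : ∀ s : ℝ, FMr s s = 1) :
    (∀ s t : ℝ, FAB s t = FA s t * FB s t) ∧
      (∀ s t : ℝ, FMr s t = Real.exp (-∫ x in s..t, r x) • FM s t) := by
  refine ⟨fun s t => eq_mul_of_hasDerivAt_mul_right_add hA hB hcomm (hFA s) (hFB s) (hFAB s)
    (hFA0 s) (hFB0 s) (hFAB0 s) t, fun s t => ?_⟩
  set E : ℝ → Matrix (Fin p) (Fin p) ℝ := fun u => Real.exp (-∫ x in s..u, r x) • 1
  have hE : ∀ u, HasDerivAt E (E u * (-r u • 1)) u := fun u =>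
    ((hasDerivAt_exp_neg_integral hr s u).smul_const 1).congr_deriv
      (by simp [E, mul_smul, smul_comm (r u)])
  have hFMr' : ∀ u, HasDerivAt (fun v => FMr s v) (FMr s u * (M u + -r u • 1)) u := fun u =>
    (hFMr s u).congr_deriv (by rw [neg_smul, ← sub_eq_add_neg])
  have hfactor := eq_mul_of_hasDerivAt_mul_right_add (B := fun u => -r u • 1) hM
    (hr.neg.smul continuous_const) (fun _ _ => (Commute.one_right _).smul_right _)
    (hFM s) hE hFMr' (hFM0 s) (by simp [E]) (hFMr0 s) t
  simpa [E] using hfactor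

/-- If `A` and `B` are continuous matrix functions whose values all commute
with each other, then the product integral of `A + B` factorizes as the product of the
product integrals of `A` and of `B`.  In particular, for a scalar function `r` and a matrix
function `M` with commuting values, the product integral of `M - r • 1` equals
`exp (-∫ r) • (product integral of M)`.  Product integrals are characterized as solutions of
the forward equation `∂/∂t F (s, t) = F (s, t) * A t`, `F (s, s) = 1`. -/
theorem productIntegral_add_of_commute {p : ℕ}
    (A B : ℝ → Matrix (Fin p) (Fin p) ℝ) (hA : Continuous A) (hB : Continuous B)
    (hcomm : ∀ x y : ℝ, Commute (A x) (B y))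
    (FA FB FAB : ℝ → ℝ → Matrix (Fin p) (Fin p) ℝ)
    (hFA : ∀ s t : ℝ, HasDerivAt (fun u => FA s u) (FA s t * A t) t)
    (hFA0 : ∀ s : ℝ, FA s s = 1)
    (hFB : ∀ s t : ℝ, HasDerivAt (fun u => FB s u) (FB s t * B t) t)
    (hFB0 : ∀ s : ℝ, FB s s = 1)
    (hFAB : ∀ s t : ℝ, HasDerivAt (fun u => FAB s u) (FAB s t * (A t + B t)) t)
    (hFAB0 : ∀ s : ℝ, FAB s s = 1)
    -- data for the particular case: a scalar function `r`, a matrix function `M` with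
    -- commuting values, and the product integrals of `M` and of `M - r • 1`
    (r : ℝ → ℝ) (M : ℝ → Matrix (Fin p) (Fin p) ℝ) (hr : Continuous r) (hM : Continuous M)
    (hMcomm : ∀ x y : ℝ, Commute (M x) (M y))
    (FM FMr : ℝ → ℝ → Matrix (Fin p) (Fin p) ℝ)
    (hFM : ∀ s t : ℝ, HasDerivAt (fun u => FM s u) (FM s t * M t) t)
    (hFM0 : ∀ s : ℝ, FM s s = 1)
    (hFMr : ∀ s t : ℝ, HasDerivAt (fun u => FMr s u) (FMr s t * (M t - r t • 1)) t)
    (hFMr0 : ∀ s : ℝ, FMr s s = 1) :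
    (∀ s t : ℝ, FAB s t = FA s t * FB s t) ∧
      (∀ s t : ℝ, FMr s t = Real.exp (-∫ x in s..t, r x) • FM s t) :=
  productIntegral_add_of_commute_general A B hA hB hcomm FA FB FAB hFA hFA0 hFB hFB0 hFAB hFAB0 r M
    hr hM FM FMr hFM hFM0 hFMr hFMr0
end

section
/- (Van Loan's lemma, constant-coefficient version.) For constant matrices A (m×m), C (n×n), B (m×n) and t ≥ 0, exp(t·[[A,B],[0,C]]) = [[exp(tA), ∫_0^t exp(uA) B exp((t−u)C) du],[0, exp(tC)]]. -/
/-!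
Put `M = [[A, B], [0, C]]` and let `X s` be the right-hand side at time `s`. Its top-right block
equals `(∫_0^s exp(uA) B exp(-uC) du) exp(sC)`, so the product rule and the fundamental theorem of
calculus give `X' = X M`, with `X 0 = 1`. Any such solution is `exp(sM)`, because
`s ↦ X s exp(-sM)` has derivative zero.
-/

open Matrix MeasureTheory

attribute [local instance] Matrix.linftyOpNormedAddCommGroup Matrix.linftyOpNormedSpace
  Matrix.linftyOpNormedRing Matrix.linftyOpNormedAlgebra

namespace NormedSpace

variable {𝔸 : Type*} [NormedRing 𝔸] [NormedAlgebra ℚ 𝔸] [CompleteSpace 𝔸]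

theorem exp_neg_mul_exp (x : 𝔸) : exp (-x) * exp x = 1 := by
  rw [← exp_add_of_commute (Commute.refl x).neg_left, neg_add_cancel, exp_zero]

theorem eq_exp_smul_of_hasDerivAt_mul {𝕂 : Type*} [RCLike 𝕂] [NormedAlgebra 𝕂 𝔸]
    {F : 𝕂 → 𝔸} {M : 𝔸} (hF : ∀ s, HasDerivAt F (F s * M) s) (h0 : F 0 = 1) (t : 𝕂) :
    F t = exp (t • M) := by
  have hG : ∀ s, HasDerivAt (fun s => F s * exp ((-s) • M)) 0 s := fun s => by
    have hE := (hasDerivAt_exp_smul_const' (𝕂 := 𝕂) M (-s)).scomp s (hasDerivAt_neg s)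
    refine ((hF s).mul hE).congr_deriv ?_
    simp [mul_assoc]
  have hGt : F t * exp ((-t) • M) = 1 := by
    simpa [h0] using is_const_of_deriv_eq_zero (fun s => (hG s).differentiableAt)
      (fun s => (hG s).deriv) t 0
  calc F t = F t * exp ((-t) • M) * exp (t • M) := by
        rw [mul_assoc, neg_smul, exp_neg_mul_exp, mul_one]
    _ = exp (t • M) := by rw [hGt, one_mul]

end NormedSpace

namespace Matrix

section Calculus

variable {𝕜 : Type*} [NontriviallyNormedField 𝕜] {k l m n : Type*} [Fintype k] [Fintype l]
  [Fintype m] [Fintype n]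

theorem _root_.HasDerivAt.matrix_fromBlocks {α : Type*} [NormedAddCommGroup α] [NormedSpace 𝕜 α]
    {a : 𝕜 → Matrix k m α} {b : 𝕜 → Matrix k n α} {c : 𝕜 → Matrix l m α}
    {d : 𝕜 → Matrix l n α} {a' b' c' d'} {x : 𝕜} (ha : HasDerivAt a a' x)
    (hb : HasDerivAt b b' x) (hc : HasDerivAt c c' x) (hd : HasDerivAt d d' x) :
    HasDerivAt (fun y => fromBlocks (a y) (b y) (c y) (d y)) (fromBlocks a' b' c' d') x := by
  have hcont : Continuous fun p : Matrix k m α × Matrix k n α × Matrix l m α × Matrix l n α =>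
      fromBlocks p.1 p.2.1 p.2.2.1 p.2.2.2 := by fun_prop
  have hslope := (hcont.tendsto (a', b', c', d')).comp (ha.tendsto_slope.prodMk_nhds
    (hb.tendsto_slope.prodMk_nhds (hc.tendsto_slope.prodMk_nhds hd.tendsto_slope)))
  refine hasDerivAt_iff_tendsto_slope.2 (hslope.congr fun y => ?_)
  ext (i | i) (j | j) <;> rfl

variable [CompleteSpace 𝕜]

variable (𝕜) in
noncomputable def mulCLM : Matrix l m 𝕜 →L[𝕜] Matrix m n 𝕜 →L[𝕜] Matrix l n 𝕜 :=
  LinearMap.toContinuousLinearMap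
    (LinearMap.toContinuousLinearMap.toLinearMap ∘ₗ mulLinearMap 𝕜)

theorem _root_.HasDerivAt.matrix_mul {f : 𝕜 → Matrix l m 𝕜} {g : 𝕜 → Matrix m n 𝕜}
    {f' : Matrix l m 𝕜} {g' : Matrix m n 𝕜} {x : 𝕜} (hf : HasDerivAt f f' x)
    (hg : HasDerivAt g g' x) :
    HasDerivAt (fun y => f y * g y) (f' * g x + f x * g') x :=
  ((mulCLM 𝕜).hasDerivAt_of_bilinear (fun _ => hf) (fun _ => hg)).congr_deriv (add_comm _ _)

end Calculus

theorem _root_.intervalIntegral.integral_matrix_mul_const {𝕜 : Type*} [RCLike 𝕜]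
    {l m n : Type*} [Fintype l] [Fintype m] [Fintype n] {f : ℝ → Matrix l m 𝕜} {a b : ℝ}
    (hf : Continuous f) (N : Matrix m n 𝕜) :
    ∫ x in a..b, f x * N = (∫ x in a..b, f x) * N := by
  let L : Matrix l m 𝕜 →L[𝕜] Matrix l n 𝕜 := (mulCLM 𝕜).flip N
  exact L.intervalIntegral_comp_comm (hf.intervalIntegrable (μ := volume) a b)

section VanLoan

open NormedSpace

variable {m n : Type*} [Fintype m] [Fintype n] [DecidableEq m] [DecidableEq n]
  (A : Matrix m m ℝ) (B : Matrix m n ℝ) (C : Matrix n n ℝ)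

noncomputable def vanLoanIntegral (t : ℝ) : Matrix m n ℝ :=
  ∫ u in (0 : ℝ)..t, exp (u • A) * B * exp ((t - u) • C)

theorem vanLoanIntegral_eq_integral_mul_exp (t : ℝ) :
    vanLoanIntegral A B C t =
      (∫ u in (0 : ℝ)..t, exp (u • A) * B * exp ((-u) • C)) * exp (t • C) := by
  have hcont : Continuous fun u : ℝ => exp (u • A) * B * exp ((-u) • C) := by fun_prop
  rw [vanLoanIntegral, ← intervalIntegral.integral_matrix_mul_const hcont]
  refine intervalIntegral.integral_congr fun u _ => ?_
  simp only [Matrix.mul_assoc]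
  rw [← Matrix.exp_add_of_commute, ← add_smul, sub_eq_neg_add]
  exact ((Commute.refl C).smul_left _).smul_right _

theorem hasDerivAt_vanLoanIntegral (t : ℝ) :
    HasDerivAt (vanLoanIntegral A B C) (exp (t • A) * B + vanLoanIntegral A B C t * C) t := by
  have hcont : Continuous fun u : ℝ => exp (u • A) * B * exp ((-u) • C) := by fun_prop
  -- Restated so that `exp` and `*` carry the plain matrix instances, not the `linftyOp` ones.
  have hexp : HasDerivAt (fun s : ℝ => exp (s • C)) (exp (t • C) * C) t :=
    hasDerivAt_exp_smul_const C t
  rw [funext (vanLoanIntegral_eq_integral_mul_exp A B C)]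
  refine ((hcont.integral_hasStrictDerivAt 0 t).hasDerivAt.matrix_mul hexp).congr_deriv ?_
  rw [Matrix.mul_assoc _ (exp _), ← Matrix.exp_add_of_commute, ← add_smul, neg_add_cancel,
    zero_smul, exp_zero, Matrix.mul_one, Matrix.mul_assoc]
  exact ((Commute.refl C).smul_left _).smul_right _

theorem hasDerivAt_fromBlocks_exp_vanLoanIntegral (t : ℝ) :
    HasDerivAt (fun s => fromBlocks (exp (s • A)) (vanLoanIntegral A B C s) 0 (exp (s • C)))
      (fromBlocks (exp (t • A)) (vanLoanIntegral A B C t) 0 (exp (t • C)) *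
        fromBlocks A B 0 C) t := by
  have hexpA : HasDerivAt (fun s : ℝ => exp (s • A)) (exp (t • A) * A) t :=
    hasDerivAt_exp_smul_const A t
  have hexpC : HasDerivAt (fun s : ℝ => exp (s • C)) (exp (t • C) * C) t :=
    hasDerivAt_exp_smul_const C t
  refine (hexpA.matrix_fromBlocks (hasDerivAt_vanLoanIntegral A B C t)
    (hasDerivAt_const t 0) hexpC).congr_deriv ?_
  simp [fromBlocks_multiply]

end VanLoan

end Matrix

theorem exp_fromBlocks_van_loan_general {m n : ℕ}
    (A : Matrix (Fin m) (Fin m) ℝ) (B : Matrix (Fin m) (Fin n) ℝ)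
    (C : Matrix (Fin n) (Fin n) ℝ) (t : ℝ) :
    NormedSpace.exp (t • Matrix.fromBlocks A B 0 C) =
      Matrix.fromBlocks (NormedSpace.exp (t • A))
        (∫ u in (0:ℝ)..t,
          NormedSpace.exp (u • A) * B * NormedSpace.exp ((t - u) • C))
        0 (NormedSpace.exp (t • C)) :=
  (NormedSpace.eq_exp_smul_of_hasDerivAt_mul (hasDerivAt_fromBlocks_exp_vanLoanIntegral A B C)
    (by simp [vanLoanIntegral]) t).symm

/-- **Van Loan's lemma, constant-coefficient version.** For constant matrices
`A` (`m × m`), `C` (`n × n`), `B` (`m × n`) and `t ≥ 0`,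
`exp (t • [[A, B], [0, C]]) = [[exp (t • A), ∫_0^t exp (u • A) * B * exp ((t-u) • C) du],
[0, exp (t • C)]]`. -/
theorem exp_fromBlocks_van_loan {m n : ℕ}
    (A : Matrix (Fin m) (Fin m) ℝ) (B : Matrix (Fin m) (Fin n) ℝ)
    (C : Matrix (Fin n) (Fin n) ℝ) (t : ℝ) (ht : 0 ≤ t) :
    NormedSpace.exp (t • Matrix.fromBlocks A B 0 C) =
      Matrix.fromBlocks (NormedSpace.exp (t • A))
        (∫ u in (0:ℝ)..t,
          NormedSpace.exp (u • A) * B * NormedSpace.exp ((t - u) • C))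
        0 (NormedSpace.exp (t • C)) :=
  exp_fromBlocks_van_loan_general A B C t
end

section
/- For the (k+1)×(k+1) block upper-triangular matrix function with diagonal blocks A_{11}(x),…,A_{nn}(x) and upper blocks A_{ij}(x), the (i,n) block of its product integral satisfies the recursion B_{i,n}(s,t) = Σ_{j=i+1}^n ∫_s^t F_{A_{ii}}(s,x) A_{ij}(x) B_{jn}(x,t) dx, where F_{A_{ii}}(s,x) = ∏_s^x (I + A_{ii}(u) du) and B_{jn} denotes the (j,n) block of the product integral of the sub-block-matrix. -/
/-! By uniqueness for the linear equation `∂ₜ F = F A`, product integrals satisfy the semigroup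
law, hence `G(x,t) = G(t,x)⁻¹` and the backward equation `∂ₓ G(x,t) = -A(x) G(x,t)`. Reading off
its `(i, last)` block, triangularity gives
`∂ₓ B_i(x,t) = -(A_ii(x) B_i(x,t) + ∑_{j>i} A_ij(x) B_j(x,t))`, so
`x ↦ F_ii(s,x) B_i(x,t)` has derivative `-F_ii(s,x) ∑_{j>i} A_ij(x) B_j(x,t)`. Integrating from
`s` to `t` and using `B_i(t,t) = 0` for `i ≠ last` gives the recursion. -/

open Matrix MeasureTheory Set

attribute [local instance] Matrix.linftyOpNormedAddCommGroup Matrix.linftyOpNormedSpace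
  Matrix.linftyOpNormedRing Matrix.linftyOpNormedAlgebra

section ProductIntegral

variable {R : Type*} [NormedRing R] [NormedAlgebra ℝ R]

structure IsProductIntegral (a : ℝ → R) (G : ℝ → ℝ → R) : Prop where
  hasDerivAt : ∀ s t, HasDerivAt (G s) (G s t * a t) t
  self : ∀ s, G s s = 1

theorem eq_of_hasDerivAt_mul_right_s6 {a f g : ℝ → R} (ha : Continuous a)
    (hf : ∀ x, HasDerivAt f (f x * a x) x) (hg : ∀ x, HasDerivAt g (g x * a x) x)
    {t₀ : ℝ} (h₀ : f t₀ = g t₀) : f = g := by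
  funext t
  obtain ⟨l, u, ht, ht₀⟩ : ∃ l u, t ∈ Ioo l u ∧ t₀ ∈ Ioo l u :=
    ⟨min t t₀ - 1, max t t₀ + 1, by grind⟩
  obtain ⟨x₀, -, hx₀⟩ := isCompact_Icc.exists_isMaxOn (nonempty_Icc.2 (ht.1.trans ht.2).le)
    (ha.norm.continuousOn (s := Icc l u))
  have hlip : ∀ x ∈ Ioo l u, LipschitzOnWith ‖a x₀‖₊ (· * a x) univ := fun x hx =>
    LipschitzWith.lipschitzOnWith <| LipschitzWith.of_dist_le_mul fun y z => by
      rw [dist_eq_norm, dist_eq_norm, ← sub_mul, coe_nnnorm, mul_comm ‖a x₀‖]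
      exact (norm_mul_le _ _).trans
        (mul_le_mul_of_nonneg_left (hx₀ (Ioo_subset_Icc_self hx)) (norm_nonneg _))
  exact ODE_solution_unique_of_mem_Ioo hlip ht₀ (fun x _ => ⟨hf x, trivial⟩)
    (fun x _ => ⟨hg x, trivial⟩) h₀ ht

namespace IsProductIntegral

variable {a : ℝ → R} {G : ℝ → ℝ → R}

theorem mul_eq (hG : IsProductIntegral a G) (ha : Continuous a) (s u t : ℝ) :
    G s u * G u t = G s t := by
  have hforward : ∀ x, HasDerivAt (fun y => G s u * G u y) (G s u * G u x * a x) x :=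
    fun x => by simpa only [mul_assoc] using (hG.hasDerivAt u x).const_mul (G s u)
  exact congrFun (eq_of_hasDerivAt_mul_right_s6 ha hforward (hG.hasDerivAt s) (t₀ := u)
    (by rw [hG.self, mul_one])) t

theorem hasDerivAt_left [HasSummableGeomSeries R] (hG : IsProductIntegral a G)
    (ha : Continuous a) (t x : ℝ) :
    HasDerivAt (fun y => G y t) (-(a x * G x t)) x := by
  have hinv : ∀ y z, G y z * G z y = 1 := fun y z => by rw [hG.mul_eq ha, hG.self]
  let U : ℝ → Rˣ := fun y => ⟨G t y, G y t, hinv t y, hinv y t⟩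
  have hG_eq : (fun y => G y t) = fun y => Ring.inverse (G t y) := by
    funext y
    exact (Ring.inverse_unit (U y)).symm
  rw [hG_eq]
  refine ((hasFDerivAt_ringInverse (𝕜 := ℝ) (U x)).comp_hasDerivAt x
    (hG.hasDerivAt t x)).congr_deriv ?_
  change -(G x t * (G t x * a x) * G x t) = _
  rw [show G x t * (G t x * a x) * G x t = G x t * G t x * (a x * G x t) by noncomm_ring,
    hinv, one_mul]

theorem continuous (hG : IsProductIntegral a G) (s : ℝ) : Continuous (G s) :=
  continuous_iff_continuousAt.2 fun t => (hG.hasDerivAt s t).continuousAt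

theorem integral_mul_eq_sub_of_hasDerivAt [CompleteSpace R] (hF : IsProductIntegral a G)
    {g r : ℝ → R} (hg : ∀ x, HasDerivAt g (-(a x * g x + r x)) x) (hr : Continuous r)
    (s t : ℝ) : ∫ x in s..t, G s x * r x = g s - G s t * g t := by
  have hderiv : ∀ x, HasDerivAt (fun y => G s y * g y) (-(G s x * r x)) x := fun x => by
    refine ((hF.hasDerivAt s x).mul (hg x)).congr_deriv ?_
    noncomm_ring
  have hFTC := intervalIntegral.integral_eq_sub_of_hasDerivAt (fun x _ => hderiv x)
    (((hF.continuous s).mul hr).neg.intervalIntegrable s t)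
  rw [intervalIntegral.integral_neg, hF.self, one_mul] at hFTC
  rw [← neg_sub, ← hFTC, neg_neg]

end IsProductIntegral

end ProductIntegral

namespace Matrix

variable {ι κ : Type*} [Fintype ι] [Fintype κ]

noncomputable def blockCLM (j k : ι) : Matrix (ι × κ) (ι × κ) ℝ →L[ℝ] Matrix κ κ ℝ :=
  LinearMap.toContinuousLinearMap
    { toFun := fun X => (comp ι ι κ κ ℝ).symm X j k
      map_add' := fun _ _ => rfl
      map_smul' := fun _ _ => rfl }

theorem blockCLM_apply (j k : ι) (X : Matrix (ι × κ) (ι × κ) ℝ) :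
    blockCLM j k X = (comp ι ι κ κ ℝ).symm X j k := rfl

theorem blockCLM_one_of_ne [DecidableEq ι] [DecidableEq κ] {j k : ι} (h : j ≠ k) :
    blockCLM (κ := κ) j k 1 = 0 := by
  ext a b
  exact one_apply_ne fun hab => h (congrArg Prod.fst hab)

theorem blockCLM_comp_mul_of_blockTriangular [LinearOrder ι] [LocallyFiniteOrderTop ι]
    {M : Matrix ι ι (Matrix κ κ ℝ)} (hM : M.BlockTriangular id)
    (X : Matrix (ι × κ) (ι × κ) ℝ) (j k : ι) :
    blockCLM j k (comp ι ι κ κ ℝ M * X) =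
      M j j * blockCLM j k X + ∑ l ∈ Finset.Ioi j, M j l * blockCLM l k X := by
  have hrow : blockCLM j k (comp ι ι κ κ ℝ M * X) = ∑ l, M j l * blockCLM l k X := by
    rw [blockCLM_apply, ← compRingEquiv_symm_apply, map_mul, compRingEquiv_symm_apply,
      Equiv.symm_apply_apply, mul_apply]
    rfl
  rw [hrow, Finset.add_sum_Ioi_eq_sum_Ici (f := fun l => M j l * blockCLM l k X)]
  refine (Finset.sum_subset (Finset.subset_univ _) fun l _ hl => ?_).symm
  rw [hM (not_le.1 (Finset.mem_Ici.not.1 hl)), zero_mul]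

end Matrix

theorem IsProductIntegral.hasDerivAt_blockCLM_left {ι κ : Type*} [Fintype ι] [Fintype κ]
    [DecidableEq ι] [DecidableEq κ] [LinearOrder ι] [LocallyFiniteOrderTop ι]
    {A : ℝ → Matrix ι ι (Matrix κ κ ℝ)}
    (hA : Continuous fun x => comp ι ι κ κ ℝ (A x)) (hAtri : ∀ x, (A x).BlockTriangular id)
    {G : ℝ → ℝ → Matrix (ι × κ) (ι × κ) ℝ}
    (hG : IsProductIntegral (fun x => comp ι ι κ κ ℝ (A x)) G) (j k : ι) (t x : ℝ) :
    HasDerivAt (fun y => blockCLM j k (G y t))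
      (-(A x j j * blockCLM j k (G x t) + ∑ l ∈ Finset.Ioi j, A x j l * blockCLM l k (G x t)))
      x := by
  refine ((blockCLM j k).hasFDerivAt.comp_hasDerivAt x
    (hG.hasDerivAt_left hA t x)).congr_deriv ?_
  exact ((blockCLM j k).map_neg _).trans
    (congrArg Neg.neg (blockCLM_comp_mul_of_blockTriangular (hAtri x) (G x t) j k))

/-- For a block upper-triangular continuous matrix function with `n + 1`
blocks of size `p × p` (blocks `A i j`, vanishing for `j < i`), the blocks `B i j (s,t)` of
its product integral satisfy, for every `i` before the last block index,
`B i last (s,t) = ∑_{j > i} ∫_s^t F_{A i i} (s,x) * A i j x * B j last (x,t) dx`,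
where `F_{A i i}` is the product integral of the diagonal block `A i i`.  Product integrals
solve the forward equation `∂/∂t F (s,t) = F (s,t) * A t`, `F (s,s) = 1`. -/
theorem productIntegral_block_recursion {n p : ℕ}
    (A : Fin (n + 1) → Fin (n + 1) → ℝ → Matrix (Fin p) (Fin p) ℝ)
    (hA : ∀ i j, Continuous (A i j))
    (htri : ∀ i j : Fin (n + 1), j < i → A i j = 0)
    (G : ℝ → ℝ → Matrix (Fin (n + 1) × Fin p) (Fin (n + 1) × Fin p) ℝ)
    (hG : ∀ s t : ℝ,
      HasDerivAt (fun u => G s u)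
        (G s t * Matrix.of fun q r : Fin (n + 1) × Fin p => A q.1 r.1 t q.2 r.2) t)
    (hG0 : ∀ s : ℝ, G s s = 1)
    (F : Fin (n + 1) → ℝ → ℝ → Matrix (Fin p) (Fin p) ℝ)
    (hF : ∀ i (s t : ℝ), HasDerivAt (fun u => F i s u) (F i s t * A i i t) t)
    (hF0 : ∀ i (s : ℝ), F i s s = 1) :
    ∀ (i : Fin (n + 1)), i < Fin.last n → ∀ s t : ℝ,
      (Matrix.of fun a b => G s t (i, a) (Fin.last n, b)) =
        ∑ j ∈ Finset.Ioi i,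
          ∫ x in s..t,
            F i s x * A i j x *
              Matrix.of fun a b => G x t (j, a) (Fin.last n, b) := by
  intro i hi s t
  have hM : Continuous fun x => comp _ _ _ _ ℝ (of fun j k => A j k x) :=
    continuous_matrix fun q r => (hA q.1 r.1).matrix_elem q.2 r.2
  have hGM : IsProductIntegral _ G := ⟨hG, hG0⟩
  let B : Fin (n + 1) → ℝ → Matrix (Fin p) (Fin p) ℝ :=
    fun j x => blockCLM j (Fin.last n) (G x t)
  have hB : ∀ j x,
      HasDerivAt (B j) (-(A j j x * B j x + ∑ k ∈ Finset.Ioi j, A j k x * B k x)) x :=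
    fun j => hGM.hasDerivAt_blockCLM_left hM (fun x j k h => congrFun (htri j k h) x) j
      (Fin.last n) t
  have hBcont : ∀ j, Continuous (B j) :=
    fun j => continuous_iff_continuousAt.2 fun x => (hB j x).continuousAt
  have hFi : IsProductIntegral (A i i) (F i) := ⟨hF i, hF0 i⟩
  have hBt : B i t = 0 := by
    simp only [B, hG0, blockCLM_one_of_ne hi.ne]
  have hduhamel := hFi.integral_mul_eq_sub_of_hasDerivAt (hB i)
    (continuous_finsetSum _ fun j _ => (hA i j).mul (hBcont j)) s t
  rw [hBt, mul_zero, sub_zero] at hduhamel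
  change B i s = _
  rw [← hduhamel]
  simp only [Finset.mul_sum, ← mul_assoc]
  exact intervalIntegral.integral_finsetSum fun j _ =>
    (((hFi.continuous s).mul (hA i j)).mul (hBcont j)).intervalIntegrable s t
end

section
/- (Thiele's differential equation, vector form.) The vector of prospective reserves V_th(t) = V(t)·e, where e is the all-ones vector, satisfies dV_th(t)/dt = r(t)V_th(t) − M(t)V_th(t) − R(t)e with terminal condition V_th(T) = 0. -/
open Matrix MeasureTheory

attribute [local instance] Matrix.linftyOpNormedAddCommGroup Matrix.linftyOpNormedSpace
  Matrix.linftyOpNormedRing Matrix.linftyOpNormedAlgebra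

/-- **Thiele's differential equation, vector form.** If the partial reserve
matrix `V` satisfies `∂V/∂t = r t • V t - M t * V t - R t * P (t,T)` with `V T = 0` and
`P (t,T)` is stochastic (`P (t,T) *ᵥ e = e` for the all-ones vector `e`), then the vector of
prospective reserves `V_th t = V t *ᵥ e` satisfies
`dV_th/dt = r t • V_th t - M t *ᵥ V_th t - R t *ᵥ e`, with `V_th T = 0`. -/
theorem thiele_vector_ode {p : ℕ} (T : ℝ)
    (M R : ℝ → Matrix (Fin p) (Fin p) ℝ) (r : ℝ → ℝ)
    (P : ℝ → ℝ → Matrix (Fin p) (Fin p) ℝ)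
    (hstoch : ∀ t : ℝ, P t T *ᵥ (fun _ => (1 : ℝ)) = fun _ => 1)
    (V : ℝ → Matrix (Fin p) (Fin p) ℝ)
    (hV : ∀ t : ℝ, HasDerivAt V (r t • V t - M t * V t - R t * P t T) t)
    (hVT : V T = 0) :
    (∀ t : ℝ,
      HasDerivAt (fun u => V u *ᵥ (fun _ => (1 : ℝ)))
        (r t • (V t *ᵥ fun _ => (1 : ℝ)) - M t *ᵥ (V t *ᵥ fun _ => (1 : ℝ)) -
          R t *ᵥ fun _ => (1 : ℝ)) t) ∧
      (V T *ᵥ fun _ => (1 : ℝ)) = 0 := by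
  classical
  set e : Fin p → ℝ := fun _ => (1 : ℝ) with he
  let L₀ : Matrix (Fin p) (Fin p) ℝ →ₗ[ℝ] (Fin p → ℝ) :=
    { toFun := fun A => A *ᵥ e
      map_add' := fun A B => Matrix.add_mulVec A B e
      map_smul' := fun c A => by simp [Matrix.smul_mulVec] }
  let L : Matrix (Fin p) (Fin p) ℝ →L[ℝ] (Fin p → ℝ) := L₀.toContinuousLinearMap
  constructor
  · intro t
    have h := L.hasFDerivAt.comp_hasDerivAt t (hV t)
    have h' : HasDerivAt (fun u => V u *ᵥ e)
        ((r t • V t - M t * V t - R t * P t T) *ᵥ e) t := h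
    convert h' using 1
    rw [Matrix.sub_mulVec, Matrix.sub_mulVec, Matrix.smul_mulVec,
      ← Matrix.mulVec_mulVec, ← Matrix.mulVec_mulVec, hstoch t]
  · rw [hVT, Matrix.zero_mulVec]
end

section
/- The moment matrices satisfy the integral recursion m^{(k)}(s,t) = k ∫_s^t P(s,x) R(x) m^{(k−1)}(x,t) dx + Σ_{m=2}^k C(k,m) ∫_s^t P(s,x) C^{(m)}(x) m^{(k−m)}(x,t) dx, where C^{(m)}(x) = D(x) ∘ B^{∘m}(x) and m^{(0)} = P. -/
/-!
Variation of constants: by the backward equation, the `M`-terms cancel in the derivative of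
`x ↦ P(s,x) m⁽ᵏ⁾(x,t)`, which is therefore `-P(s,x) (k R m⁽ᵏ⁻¹⁾ + ∑ⱼ C(k,j) C⁽ʲ⁾ m⁽ᵏ⁻ʲ⁾)(x,t)`;
integrating over `[s,t]` and using `P(s,s) = 1`, `m⁽ᵏ⁾(t,t) = 0` gives the recursion.

The integrands are continuous in `x`; for `m⁽⁰⁾(x,t) = P(x,t)` this needs an argument, since `P`
is only given as a solution in its second variable. Uniqueness for the linear equation `Y' = Y M` gives Chapman–Kolmogorov
`P(s,x) P(x,u) = P(s,u)`, so `P(0,x)` is invertible with inverse `P(x,0)` and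
`P(x,t) = P(0,x)⁻¹ P(0,t)` is continuous in `x`.
-/

open Matrix MeasureTheory

attribute [local instance] Matrix.linftyOpNormedAddCommGroup Matrix.linftyOpNormedSpace
  Matrix.linftyOpNormedRing Matrix.linftyOpNormedAlgebra

open Set

lemma lipschitzWith_mul_const {A : Type*} [NormedRing A] (a : A) : LipschitzWith ‖a‖₊ (· * a) :=
  LipschitzWith.of_dist_le_mul fun y z => by
    rw [dist_eq_norm, dist_eq_norm, ← sub_mul, coe_nnnorm, mul_comm ‖a‖]
    exact norm_mul_le _ _

theorem transition_mul_transition {A : Type*} [NormedRing A] [NormedAlgebra ℝ A] {M : ℝ → A} {P : ℝ → ℝ → A} (hM : Continuous M)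
    (hP : ∀ s t, HasDerivAt (P s) (P s t * M t) t) (hP0 : ∀ s, P s s = 1) (s x u : ℝ) :
    P s x * P x u = P s u := by
  obtain ⟨a, b, hu, hx⟩ : ∃ a b, u ∈ Ioo a b ∧ x ∈ Ioo a b :=
    ⟨min u x - 1, max u x + 1, by grind, by grind⟩
  obtain ⟨C, hC⟩ := (isCompact_Icc (a := a) (b := b)).exists_bound_of_continuousOn
    hM.continuousOn
  have hlip : ∀ r ∈ Ioo a b, LipschitzOnWith C.toNNReal (· * M r) univ := fun r hr =>
    ((lipschitzWith_mul_const (M r)).weaken <| by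
      rw [← norm_toNNReal]
      exact Real.toNNReal_le_toNNReal (hC r (Ioo_subset_Icc_self hr))).lipschitzOnWith
  refine ODE_solution_unique_of_mem_Ioo (f := fun u => P s x * P x u) (g := P s) hlip hx
    (fun r _ => ⟨?_, trivial⟩) (fun r _ => ⟨hP s r, trivial⟩) (by simp [hP0]) hu
  simpa only [mul_assoc] using (hP x r).const_mul (P s x)

theorem continuous_transition_fst {A : Type*} [NormedRing A] [NormedAlgebra ℝ A]
    [CompleteSpace A] {M : ℝ → A} {P : ℝ → ℝ → A} (hM : Continuous M)
    (hP : ∀ s t, HasDerivAt (P s) (P s t * M t) t) (hP0 : ∀ s, P s s = 1) (t : ℝ) :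
    Continuous fun x => P x t := by
  have hCK := transition_mul_transition hM hP hP0
  let U : ℝ → Aˣ := fun x =>
    ⟨P 0 x, P x 0, (hCK 0 x 0).trans (hP0 0), (hCK x 0 x).trans (hP0 x)⟩
  have hP_eq : (fun x => P x t) = fun x => Ring.inverse (P 0 x) * P 0 t := funext fun x =>
    calc P x t = ↑(U x)⁻¹ * (U x * P x t) := by rw [Units.inv_mul_cancel_left]
      _ = Ring.inverse (P 0 x) * P 0 t := by rw [← hCK 0 x t, ← Ring.inverse_unit]
  rw [hP_eq, continuous_iff_continuousAt]
  exact fun x => ((NormedRing.inverse_continuousAt (U x)).comp (f := P 0)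
    (hP 0 x).continuousAt).mul continuousAt_const

theorem variation_of_constants_backward {A : Type*} [NormedRing A] [NormedAlgebra ℝ A]
    [CompleteSpace A] {M G u Q : ℝ → A} {s t : ℝ}
    (hQ : ∀ x ∈ uIcc s t, HasDerivAt Q (Q x * M x) x) (hQs : Q s = 1)
    (hu : ∀ x ∈ uIcc s t, HasDerivAt u (-(M x * u x + G x)) x)
    (hG : ContinuousOn G (uIcc s t)) :
    u s = Q t * u t + ∫ x in s..t, Q x * G x := by
  have hderiv : ∀ x ∈ uIcc s t, HasDerivAt (fun x => Q x * u x) (-(Q x * G x)) x :=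
    fun x hx => ((hQ x hx).mul (hu x hx)).congr_deriv (by noncomm_ring)
  have hFTC := intervalIntegral.integral_eq_sub_of_hasDerivAt hderiv
    ((HasDerivAt.continuousOn hQ).mul hG).intervalIntegrable.neg
  rw [intervalIntegral.integral_neg, hQs, one_mul] at hFTC
  rw [neg_eq_iff_eq_neg.mp hFTC]
  abel

/-- The moment matrices of the Markov reward process satisfy the integral
recursion `m⁽ᵏ⁾ (s,t) = k ∫_s^t P (s,x) R x m⁽ᵏ⁻¹⁾ (x,t) dx +
∑_{j=2}^k C(k,j) ∫_s^t P (s,x) C⁽ʲ⁾ x m⁽ᵏ⁻ʲ⁾ (x,t) dx`, where `m⁽⁰⁾ = P` is the transition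
matrix (the product integral of the intensity `M`) and the `m⁽ᵏ⁾` satisfy the backward
differential equation with terminal condition `m⁽ᵏ⁾ (t,t) = 0` for `k ≥ 1`. -/
theorem moment_matrices_integral_recursion {p : ℕ}
    (M R : ℝ → Matrix (Fin p) (Fin p) ℝ) (Cm : ℕ → ℝ → Matrix (Fin p) (Fin p) ℝ)
    (hM : Continuous M) (hR : Continuous R) (hCm : ∀ j, Continuous (Cm j))
    (P : ℝ → ℝ → Matrix (Fin p) (Fin p) ℝ)
    (hP : ∀ s t : ℝ, HasDerivAt (fun u => P s u) (P s t * M t) t)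
    (hP0 : ∀ s : ℝ, P s s = 1)
    (m : ℕ → ℝ → ℝ → Matrix (Fin p) (Fin p) ℝ)
    (hm0 : ∀ s t : ℝ, m 0 s t = P s t)
    (hmT : ∀ (k : ℕ), 1 ≤ k → ∀ t : ℝ, m k t t = 0)
    (hODE : ∀ (k : ℕ), 1 ≤ k → ∀ s t : ℝ,
      HasDerivAt (fun s' => m k s' t)
        (-(M s * m k s t + (k : ℝ) • (R s * m (k - 1) s t) +
            ∑ j ∈ Finset.Icc 2 k, (k.choose j : ℝ) • (Cm j s * m (k - j) s t))) s) :
    ∀ (k : ℕ), 1 ≤ k → ∀ s t : ℝ, s ≤ t →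
      m k s t = (k : ℝ) • (∫ x in s..t, P s x * R x * m (k - 1) x t) +
        ∑ j ∈ Finset.Icc 2 k,
          (k.choose j : ℝ) • ∫ x in s..t, P s x * Cm j x * m (k - j) x t := by
  intro k hk s t _
  have hm_cont : ∀ j, Continuous fun x => m j x t := by
    rintro (_ | j)
    · simp_rw [hm0]
      exact continuous_transition_fst hM hP hP0 t
    · exact continuous_iff_continuousAt.2 fun x => (hODE (j + 1) j.succ_pos x t).continuousAt
  have hPs : Continuous (P s) := continuous_iff_continuousAt.2 fun x => (hP s x).continuousAt
  have hR_cont : Continuous fun x => P s x * R x * m (k - 1) x t := by fun_prop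
  have hC_cont : ∀ j, Continuous fun x => P s x * Cm j x * m (k - j) x t := by fun_prop
  rw [variation_of_constants_backward (t := t) (u := fun x => m k x t) (fun x _ => hP s x)
    (hP0 s) (fun x _ => add_assoc (M x * m k x t) _ _ ▸ hODE k hk x t) (by fun_prop),
    hmT k hk t, mul_zero, zero_add]
  simp only [mul_add, Finset.mul_sum, mul_smul_comm, ← mul_assoc]
  rw [intervalIntegral.integral_add ?_ ?_, intervalIntegral.integral_smul,
    intervalIntegral.integral_finsetSum fun j _ => ?_]
  · simp only [intervalIntegral.integral_smul]
  · exact ((hC_cont j).const_smul (k.choose j : ℝ)).intervalIntegrable s t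
  · exact (hR_cont.const_smul (k : ℝ)).intervalIntegrable s t
  · exact (continuous_finsetSum _ fun j _ =>
      (hC_cont j).const_smul (k.choose j : ℝ)).intervalIntegrable s t
end
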